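/- Let α be an infinite cardinal and let G be an α-pseudocompact abelian topological group. Then the following conditions are equivalent: (a) G is α-singular; (b) there exists a positive integer m such that G[m] = {x ∈ G : mx = 0} belongs to Λ_α(G); (c) G has a torsion closed subgroup that is a G_α-set of G; (d) there exists N ∈ Λ_α(G) contained in the torsion subgroup t(G) of G; (e) the completion of G is α-singular. -/

import Mathlib

open Cardinal Set Function Topology Pointwise

universe u

/-- A `G_α`-set: an intersection of at most `α` many open sets. -/
def IsGAlphaSet {X : Type u} [TopologicalSpace X] (α : Cardinal.{u}) (S : Set X) : Prop :=
  ∃ 𝒰 : Set (Set X), (∀ U ∈ 𝒰, IsOpen U) ∧ #𝒰 ≤ α ∧ S = ⋂₀ 𝒰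

/-- A subset is `G_α`-dense if it meets every nonempty `G_α`-set. -/
def IsGAlphaDense {X : Type u} [TopologicalSpace X] (α : Cardinal.{u}) (D : Set X) : Prop :=
  ∀ S : Set X, IsGAlphaSet α S → S.Nonempty → (D ∩ S).Nonempty

/-- `α`-pseudocompact: every continuous map to `ℝ^α` has compact range. -/
def IsAlphaPseudocompact (α : Cardinal.{u}) (X : Type u) [TopologicalSpace X] : Prop :=
  ∀ f : X → (α.out → ℝ), Continuous f → IsCompact (Set.range f)

/-- The topological weight: least cardinality of a basis. -/
noncomputable def tweight (X : Type u) [TopologicalSpace X] : Cardinal.{u} :=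
  sInf {c : Cardinal.{u} | ∃ B : Set (Set X), TopologicalSpace.IsTopologicalBasis B ∧ #B = c}

/-- The pseudocharacter: sup over points of the least cardinality of a family of
neighborhoods intersecting in that point. -/
noncomputable def pseudochar (X : Type u) [TopologicalSpace X] : Cardinal.{u} :=
  ⨆ x : X, sInf {c : Cardinal.{u} |
    ∃ 𝒰 : Set (Set X), (∀ U ∈ 𝒰, U ∈ nhds x) ∧ ⋂₀ 𝒰 = {x} ∧ #𝒰 = c}

/-- `s_α`-extremal: no proper dense `α`-pseudocompact subgroup. -/
def IsSAlphaExtremal (α : Cardinal.{u}) (G : Type u) [AddCommGroup G] [TopologicalSpace G] :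
    Prop :=
  ¬ ∃ D : AddSubgroup G, D ≠ ⊤ ∧ Dense (D : Set G) ∧ IsAlphaPseudocompact α D

/-- `r_α`-extremal: no strictly finer `α`-pseudocompact group topology. -/
def IsRAlphaExtremal (α : Cardinal.{u}) (G : Type u) [AddCommGroup G] [t : TopologicalSpace G] :
    Prop :=
  ¬ ∃ t' : TopologicalSpace G, t' < t ∧ @IsTopologicalAddGroup G t' _ ∧
    @IsAlphaPseudocompact α G t'

/-- A divisible abelian group. -/
def IsDivisibleGroup (A : Type u) [AddCommGroup A] : Prop :=
  ∀ a : A, ∀ n : ℕ, 0 < n → ∃ b : A, n • b = a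

/-- The free rank `r₀` of an abelian group. -/
noncomputable def freeRank (A : Type u) [AddCommGroup A] : Cardinal.{u} :=
  Module.rank ℤ A

/-- `d_α`-extremal: all quotients by dense `α`-pseudocompact subgroups are divisible. -/
def IsDAlphaExtremal (α : Cardinal.{u}) (G : Type u) [AddCommGroup G] [TopologicalSpace G] :
    Prop :=
  ∀ D : AddSubgroup G, Dense (D : Set G) → IsAlphaPseudocompact α D →
    IsDivisibleGroup (G ⧸ D)

/-- `c_α`-extremal: all quotients by dense `α`-pseudocompact subgroups have free rank `< 2^α`. -/
def IsCAlphaExtremal (α : Cardinal.{u}) (G : Type u) [AddCommGroup G] [TopologicalSpace G] :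
    Prop :=
  ∀ D : AddSubgroup G, Dense (D : Set G) → IsAlphaPseudocompact α D →
    freeRank (G ⧸ D) < 2 ^ α

/-- `α`-extremal: both `d_α`- and `c_α`-extremal. -/
def IsAlphaExtremal (α : Cardinal.{u}) (G : Type u) [AddCommGroup G] [TopologicalSpace G] :
    Prop :=
  IsDAlphaExtremal α G ∧ IsCAlphaExtremal α G

/-- The homomorphism `x ↦ m • x` of an abelian group. -/
def nsmulHom (m : ℕ) (G : Type u) [AddCommGroup G] : G →+ G :=
  AddMonoidHom.mk' (fun x => m • x) (fun a b => smul_add m a b)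

/-- `α`-singular: `w(mG) ≤ α` for some positive integer `m`. -/
def IsAlphaSingular (α : Cardinal.{u}) (G : Type u) [AddCommGroup G] [TopologicalSpace G] :
    Prop :=
  ∃ m : ℕ, 0 < m ∧ tweight ((nsmulHom m G).range) ≤ α

/-- `Λ_α(G)`: the closed subgroups of the abelian group `G` which are `G_α`-sets. -/
def LambdaAlphaAdd (α : Cardinal.{u}) (G : Type u) [AddCommGroup G] [TopologicalSpace G] :
    Set (AddSubgroup G) :=
  {N | IsClosed (N : Set G) ∧ IsGAlphaSet α (N : Set G)}

/-- The `P_α`-topology: the topology generated by the `G_α`-sets. -/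
def PAlphaTop (α : Cardinal.{u}) (X : Type u) (t : TopologicalSpace X) : TopologicalSpace X :=
  TopologicalSpace.generateFrom {S : Set X | @IsGAlphaSet X t α S}

/-- The Bohr topology on an abelian group: the initial topology of all homomorphisms
to the circle group `𝕋 = ℝ/ℤ`. -/
noncomputable def bohrTopology (G : Type u) [AddCommGroup G] : TopologicalSpace G :=
  ⨅ h : G →+ AddCircle (1 : ℝ), TopologicalSpace.induced h inferInstance

/-!
Only (d) ⇒ (e) has substance. Since `e` is an embedding, the torsion `G_α`-subgroup `N` is
`W ∩ G` for a `G_α`-set `W` of the compact group `K`. Inside every open neighbourhood of `0` in `K`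
a halving chain `V₀ ⊇ V₁ + V₁ ⊇ …` cuts out a closed subgroup whose quotient has a countable
neighbourhood base at `0`, hence is metrizable and second countable; intersecting `≤ α` of them
gives a closed `G_α`-subgroup `H ⊆ W` with `w(K/H) ≤ α`, as `K/H` embeds in their product.
Because `G` is `α`-pseudocompact it meets every nonempty `G_α`-set of `K`, in particular the set
of elements of `H` of infinite order, which must therefore be empty. A compact torsion group has
bounded exponent by Baire, so `mH = 0` for some `m > 0`, and `mK` is an open continuous image of
`K/H`, whence `w(mK) ≤ α`.
-/

open TopologicalSpace Filter

section Weight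

variable {X Y : Type u} [TopologicalSpace X] [TopologicalSpace Y] {α : Cardinal.{u}}

theorem tweight_le_mk_of_isTopologicalBasis {B : Set (Set X)} (hB : IsTopologicalBasis B) :
    tweight X ≤ #B :=
  csInf_le' ⟨B, hB, rfl⟩

theorem exists_isTopologicalBasis_mk_eq_tweight (X : Type u) [TopologicalSpace X] :
    ∃ B : Set (Set X), IsTopologicalBasis B ∧ #B = tweight X :=
  csInf_mem (s := {c | ∃ B : Set (Set X), IsTopologicalBasis B ∧ #B = c})
    ⟨_, _, isTopologicalBasis_opens, rfl⟩

theorem tweight_le_of_generateFrom {s : Set (Set X)} (hs : ‹TopologicalSpace X› = generateFrom s)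
    (hα : ℵ₀ ≤ α) (hsα : #s ≤ α) : tweight X ≤ α := by
  have hfin : #(Finset s) ≤ α := by
    rcases finite_or_infinite s with _ | _
    · exact (mk_le_aleph0_iff.2 inferInstance).trans hα
    · exact (mk_finset_of_infinite s).trans_le hsα
  refine (tweight_le_mk_of_isTopologicalBasis (isTopologicalBasis_of_subbasis hs)).trans
    (mk_image_le.trans (le_trans ?_ hfin))
  refine mk_le_of_surjective (f := fun F : Finset s => ⟨(↑) '' (F : Set s), ?_⟩) ?_
  · exact ⟨(F.finite_toSet.image _), by rintro _ ⟨t, -, rfl⟩; exact t.2⟩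
  · rintro ⟨t, htfin, hts⟩
    refine ⟨(htfin.preimage Subtype.val_injective.injOn).toFinset, Subtype.ext ?_⟩
    simp [image_preimage_eq_of_subset (Subtype.range_val (s := s) ▸ hts)]

theorem tweight_le_aleph0 [SecondCountableTopology X] : tweight X ≤ ℵ₀ := by
  obtain ⟨B, hBc, -, hB⟩ := exists_countable_basis X
  exact (tweight_le_mk_of_isTopologicalBasis hB).trans hBc.le_aleph0

theorem tweight_pi_le {ι : Type u} {Q : ι → Type u} [∀ i, TopologicalSpace (Q i)]
    (hα : ℵ₀ ≤ α) (hι : #ι ≤ α) (hQ : ∀ i, tweight (Q i) ≤ α) : tweight (∀ i, Q i) ≤ α := by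
  choose B hB hBcard using fun i => exists_isTopologicalBasis_mk_eq_tweight (Q i)
  refine tweight_le_of_generateFrom (s := ⋃ i, preimage (eval i) '' B i) ?_ hα ?_
  · simp only [generateFrom_iUnion, ← induced_generateFrom_eq, ← (hB _).eq_generateFrom]
    rfl
  · calc #(⋃ i, preimage (eval i) '' B i) ≤ #ι * ⨆ i, #(preimage (eval i) '' B i) :=
          mk_iUnion_le _
      _ ≤ α * α :=
          mul_le_mul' hι (ciSup_le' fun i => mk_image_le.trans ((hBcard i).trans_le (hQ i)))
      _ = α := mul_eq_self hα

theorem Topology.IsInducing.tweight_le {f : X → Y} (hf : IsInducing f) :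
    tweight X ≤ tweight Y := by
  obtain ⟨B, hB, hcard⟩ := exists_isTopologicalBasis_mk_eq_tweight Y
  exact (tweight_le_mk_of_isTopologicalBasis (hB.isInducing hf)).trans (hcard ▸ mk_image_le)

theorem IsOpenMap.tweight_le {f : X → Y} (hf : IsOpenMap f) (hc : Continuous f)
    (hs : Surjective f) : tweight Y ≤ tweight X := by
  obtain ⟨B, hB, hcard⟩ := exists_isTopologicalBasis_mk_eq_tweight X
  have hbasis : IsTopologicalBasis (image f '' B) := by
    refine isTopologicalBasis_of_isOpen_of_nhds ?_ fun y W hyW hW => ?_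
    · rintro _ ⟨b, hb, rfl⟩
      exact hf b (hB.isOpen hb)
    · obtain ⟨x, rfl⟩ := hs y
      obtain ⟨b, hb, hxb, hbW⟩ := hB.exists_subset_of_mem_open hyW (hW.preimage hc)
      exact ⟨f '' b, mem_image_of_mem _ hb, mem_image_of_mem f hxb, image_subset_iff.2 hbW⟩
  exact (tweight_le_mk_of_isTopologicalBasis hbasis).trans (hcard ▸ mk_image_le)

theorem tweight_quotient_ker_le {K L : Type u} [AddGroup K] [TopologicalSpace K] [CompactSpace K]
    [AddGroup L] [TopologicalSpace L] [T2Space L] (f : K →+ L) (hf : Continuous f) :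
    tweight (K ⧸ f.ker) ≤ tweight L := by
  have hc : Continuous (QuotientAddGroup.kerLift f) :=
    (QuotientAddGroup.isQuotientMap_mk _).continuous_iff.2 hf
  exact (hc.isClosedEmbedding (QuotientAddGroup.kerLift_injective f)).isInducing.tweight_le

end Weight

section GAlpha

variable {X Y : Type u} [TopologicalSpace X] [TopologicalSpace Y] {α : Cardinal.{u}}

theorem IsGAlphaSet.preimage {S : Set Y} (hS : IsGAlphaSet α S) {f : X → Y}
    (hf : Continuous f) : IsGAlphaSet α (f ⁻¹' S) := by
  obtain ⟨𝒰, hopen, hcard, rfl⟩ := hS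
  refine ⟨Set.preimage f '' 𝒰, ?_, mk_image_le.trans hcard, ?_⟩
  · rintro _ ⟨U, hU, rfl⟩
    exact (hopen U hU).preimage hf
  · rw [preimage_sInter, sInter_image]

theorem IsGAlphaSet.inter {S T : Set X} (hS : IsGAlphaSet α S) (hT : IsGAlphaSet α T)
    (hα : ℵ₀ ≤ α) : IsGAlphaSet α (S ∩ T) := by
  obtain ⟨𝒰, hU, hUcard, rfl⟩ := hS
  obtain ⟨𝒱, hV, hVcard, rfl⟩ := hT
  refine ⟨𝒰 ∪ 𝒱, fun W hW => hW.elim (hU W) (hV W), ?_, (sInter_union 𝒰 𝒱).symm⟩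
  exact (mk_union_le 𝒰 𝒱).trans ((add_le_add hUcard hVcard).trans (add_eq_self hα).le)

theorem isGAlphaSet_iInter {ι : Type u} {S : ι → Set X} (hS : ∀ i, IsGAlphaSet α (S i))
    (hα : ℵ₀ ≤ α) (hι : #ι ≤ α) : IsGAlphaSet α (⋂ i, S i) := by
  choose 𝒰 hopen hcard hS using hS
  refine ⟨⋃ i, 𝒰 i, fun U hU => ?_, ?_, ?_⟩
  · obtain ⟨i, hi⟩ := mem_iUnion.1 hU
    exact hopen i U hi
  · calc #(⋃ i, 𝒰 i) ≤ #ι * ⨆ i, #(𝒰 i) := mk_iUnion_le _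
      _ ≤ α * α := mul_le_mul' hι (ciSup_le' hcard)
      _ = α := mul_eq_self hα
  · rw [sInter_iUnion]
    exact iInter_congr hS

theorem IsGδ.isGAlphaSet {S : Set X} (hS : IsGδ S) (hα : ℵ₀ ≤ α) : IsGAlphaSet α S := by
  obtain ⟨T, hT, hcount, rfl⟩ := hS
  exact ⟨T, hT, hcount.le_aleph0.trans hα, rfl⟩

theorem Topology.IsInducing.exists_isGAlphaSet_preimage_eq {f : X → Y} (hf : IsInducing f)
    {S : Set X} (hS : IsGAlphaSet α S) : ∃ T : Set Y, IsGAlphaSet α T ∧ f ⁻¹' T = S := by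
  obtain ⟨𝒰, hopen, hcard, rfl⟩ := hS
  choose! V hV hVU using fun U hU => hf.isOpen_iff.1 (hopen U hU)
  refine ⟨⋂₀ (V '' 𝒰), ⟨V '' 𝒰, ?_, mk_image_le.trans hcard, rfl⟩, ?_⟩
  · rintro _ ⟨U, hU, rfl⟩
    exact hV U hU
  · rw [preimage_sInter, biInter_image, sInter_eq_biInter]
    exact iInter₂_congr hVU

theorem isGAlphaSet_singleton_of_tweight_le [T1Space X] (hw : tweight X ≤ α) (x : X) :
    IsGAlphaSet α {x} := by
  obtain ⟨B, hB, hcard⟩ := exists_isTopologicalBasis_mk_eq_tweight X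
  refine ⟨{U ∈ B | x ∈ U}, fun U hU => hB.isOpen hU.1,
    (mk_le_mk_of_subset (sep_subset _ _)).trans (hcard.trans_le hw), ?_⟩
  rw [sInter_eq_biInter, ← biInter_basis_nhds (hB.nhds_hasBasis (a := x))]
  rfl

/-- Urysohn functions for the members of the family assemble into one map `Φ : Y → ℝ^α` whose
fibre through a point of the `G_α`-set lies inside it; `Φ(X)` is compact, hence closed, so it
contains `Φ y`. -/
theorem IsAlphaPseudocompact.isGAlphaDense_range [CompletelyRegularSpace Y]
    (hX : IsAlphaPseudocompact α X) {e : X → Y} (he : Continuous e) (hd : DenseRange e) :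
    IsGAlphaDense α (range e) := by
  rintro _ ⟨𝒰, hopen, hcard, rfl⟩ ⟨y, hy⟩
  obtain ⟨ι⟩ : Nonempty (𝒰 ↪ α.out) := by rwa [← Cardinal.le_def, mk_out]
  choose f hfc hfy hf1 using fun U : 𝒰 => CompletelyRegularSpace.completely_regular y _
    (hopen U U.2).isClosed_compl (not_not.2 (hy U U.2))
  let Φ : Y → α.out → ℝ := fun z => extend ι (fun U => (f U z : ℝ)) 0
  have hΦ : ∀ z (U : 𝒰), Φ z (ι U) = f U z := fun z U => ι.injective.extend_apply _ _ U
  have hΦc : Continuous Φ := by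
    refine continuous_pi fun a => ?_
    by_cases ha : ∃ U, ι U = a
    · obtain ⟨U, rfl⟩ := ha
      simp only [hΦ]
      exact continuous_subtype_val.comp (hfc U)
    · simp only [Φ, extend_apply' _ _ _ ha]
      exact continuous_const
  obtain ⟨x, hx⟩ : Φ y ∈ range (Φ ∘ e) := by
    refine (hX _ (hΦc.comp he)).isClosed.closure_subset ?_
    rw [range_comp]
    exact mem_closure_image hΦc.continuousAt (hd y)
  refine ⟨e x, mem_range_self x, fun U hU => ?_⟩
  by_contra hxU
  have := congrFun hx (ι ⟨U, hU⟩)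
  simp only [comp_apply, hΦ, hfy, hf1 ⟨U, hU⟩ hxU] at this
  simp at this

end GAlpha

section HalvingChain

variable {K : Type u} [AddGroup K] [TopologicalSpace K]

structure IsHalvingChain (V : ℕ → Set K) : Prop where
  isOpen : ∀ n, IsOpen (V n)
  zero_mem : ∀ n, (0 : K) ∈ V n
  add_subset : ∀ n, V (n + 1) + V (n + 1) ⊆ V n
  neg_subset : ∀ n, -V (n + 1) ⊆ V n

theorem exists_isHalvingChain [IsTopologicalAddGroup K] {W : Set K} (hW : IsOpen W)
    (h0 : (0 : K) ∈ W) : ∃ V : ℕ → Set K, IsHalvingChain V ∧ V 0 = W := by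
  have step : ∀ U : {U : Set K // IsOpen U ∧ (0 : K) ∈ U},
      ∃ V : {U : Set K // IsOpen U ∧ (0 : K) ∈ U}, V.1 + V.1 ⊆ U.1 ∧ -V.1 ⊆ U.1 := by
    rintro ⟨U, hU, hU0⟩
    obtain ⟨V, hV, hV0, hVU⟩ := exists_open_nhds_zero_half (hU.mem_nhds hU0)
    refine ⟨⟨V ∩ -U, hV.inter hU.neg, hV0, by simpa using hU0⟩, ?_, fun v hv => ?_⟩
    · rintro _ ⟨v, hv, w, hw, rfl⟩
      exact hVU v hv.1 w hw.1
    · simpa using hv.2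
  choose next hnext using step
  refine ⟨fun n => (next^[n] ⟨W, hW, h0⟩).1, ⟨fun n => (next^[n] _).2.1,
    fun n => (next^[n] _).2.2, fun n => ?_, fun n => ?_⟩, rfl⟩
  · rw [iterate_succ_apply']
    exact (hnext _).1
  · rw [iterate_succ_apply']
    exact (hnext _).2

namespace IsHalvingChain

variable {V : ℕ → Set K}

theorem succ_subset (hV : IsHalvingChain V) (n : ℕ) : V (n + 1) ⊆ V n := fun x hx => by
  simpa using hV.add_subset n (add_mem_add hx (hV.zero_mem (n + 1)))

def addSubgroup (hV : IsHalvingChain V) : AddSubgroup K where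
  carrier := ⋂ n, V n
  zero_mem' := mem_iInter.2 hV.zero_mem
  add_mem' hx hy := mem_iInter.2 fun n =>
    hV.add_subset n (add_mem_add (mem_iInter.1 hx (n + 1)) (mem_iInter.1 hy (n + 1)))
  neg_mem' hx := mem_iInter.2 fun n => hV.neg_subset n (neg_mem_neg.2 (mem_iInter.1 hx (n + 1)))

theorem isGδ_addSubgroup (hV : IsHalvingChain V) : IsGδ (hV.addSubgroup : Set K) :=
  .iInter_of_isOpen hV.isOpen

variable [IsTopologicalAddGroup K]

theorem closure_succ_subset (hV : IsHalvingChain V) (n : ℕ) : closure (V (n + 1)) ⊆ V n := by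
  intro x hx
  obtain ⟨y, hxy, hy⟩ := mem_closure_iff.1 hx {z | x - z ∈ V (n + 1)}
    ((hV.isOpen _).preimage (continuous_const.sub continuous_id)) (by simpa using hV.zero_mem _)
  simpa using hV.add_subset n (add_mem_add hxy hy)

theorem iInter_closure_succ (hV : IsHalvingChain V) : ⋂ n, closure (V (n + 1)) = hV.addSubgroup :=
  subset_antisymm (fun _ hx => mem_iInter.2 fun n => hV.closure_succ_subset n (mem_iInter.1 hx n))
    (fun _ hx => mem_iInter.2 fun n => subset_closure (mem_iInter.1 hx (n + 1)))

theorem isClosed_addSubgroup (hV : IsHalvingChain V) : IsClosed (hV.addSubgroup : Set K) :=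
  hV.iInter_closure_succ ▸ isClosed_iInter fun _ => isClosed_closure

theorem exists_subset_of_forall_mem_nhds [CompactSpace K] (hV : IsHalvingChain V) {U : Set K}
    (hU : ∀ x ∈ hV.addSubgroup, U ∈ 𝓝 x) : ∃ n, V (n + 1) ⊆ U := by
  obtain ⟨n, hn⟩ := exists_subset_nhds_of_isCompact'
    (antitone_nat_of_succ_le (f := fun n => closure (V (n + 1)))
      fun n => closure_mono (hV.succ_subset (n + 1))).directed_ge
    (fun _ => isClosed_closure.isCompact) (fun _ => isClosed_closure)
    fun x hx => hU x (by rwa [← SetLike.mem_coe, ← hV.iInter_closure_succ])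
  exact ⟨n, subset_closure.trans hn⟩

end IsHalvingChain

end HalvingChain

section CompactGroup

variable {K : Type u} [AddCommGroup K] [TopologicalSpace K] [IsTopologicalAddGroup K]

theorem secondCountableTopology_of_isCountablyGenerated_nhds_zero [CompactSpace K] [T0Space K]
    [(𝓝 (0 : K)).IsCountablyGenerated] : SecondCountableTopology K := by
  let : UniformSpace K := IsTopologicalAddGroup.rightUniformSpace K
  have : IsUniformAddGroup K := isUniformAddGroup_of_addCommGroup
  have : (uniformity K).IsCountablyGenerated := IsUniformAddGroup.uniformity_countably_generated
  have := UniformSpace.metrizableSpace (X := K)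
  infer_instance

theorem IsHalvingChain.nhds_zero_quotient_hasBasis [CompactSpace K] {V : ℕ → Set K}
    (hV : IsHalvingChain V) :
    (𝓝 (0 : K ⧸ hV.addSubgroup)).HasBasis (fun _ => True) fun n => (↑) '' V n := by
  refine hasBasis_iff.2 fun U => ⟨fun hU => ?_, fun ⟨n, _, hn⟩ => mem_of_superset ?_ hn⟩
  · obtain ⟨n, hn⟩ := hV.exists_subset_of_forall_mem_nhds (U := (↑) ⁻¹' U) fun x hx =>
      (QuotientAddGroup.isQuotientMap_mk _).continuous.continuousAt.preimage_mem_nhds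
        (by rwa [(QuotientAddGroup.eq_zero_iff x).2 hx])
    exact ⟨n + 1, trivial, image_subset_iff.2 hn⟩
  · exact (QuotientAddGroup.isOpenMap_coe _ (hV.isOpen n)).mem_nhds ⟨0, hV.zero_mem n, rfl⟩

theorem exists_addSubgroup_subset_secondCountable_quotient [CompactSpace K] {W : Set K}
    (hW : IsOpen W) (h0 : (0 : K) ∈ W) :
    ∃ H : AddSubgroup K, IsClosed (H : Set K) ∧ IsGδ (H : Set K) ∧ (H : Set K) ⊆ W ∧
      SecondCountableTopology (K ⧸ H) := by
  obtain ⟨V, hV, rfl⟩ := exists_isHalvingChain hW h0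
  have := hV.isClosed_addSubgroup
  have := hV.nhds_zero_quotient_hasBasis.isCountablyGenerated
  exact ⟨hV.addSubgroup, hV.isClosed_addSubgroup, hV.isGδ_addSubgroup, iInter_subset _ 0,
    secondCountableTopology_of_isCountablyGenerated_nhds_zero⟩

theorem exists_addSubgroup_subset_tweight_quotient_le [CompactSpace K] {α : Cardinal.{u}}
    (hα : ℵ₀ ≤ α) {S : Set K} (hS : IsGAlphaSet α S) (h0 : (0 : K) ∈ S) :
    ∃ H : AddSubgroup K, IsClosed (H : Set K) ∧ IsGAlphaSet α (H : Set K) ∧ (H : Set K) ⊆ S ∧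
      tweight (K ⧸ H) ≤ α := by
  obtain ⟨𝒰, hopen, hcard, rfl⟩ := hS
  choose H hHc hHδ hHU hHsc using fun U : 𝒰 =>
    exists_addSubgroup_subset_secondCountable_quotient (hopen U U.2) (h0 U U.2)
  let φ : K →+ ∀ U : 𝒰, K ⧸ H U := AddMonoidHom.pi fun U => QuotientAddGroup.mk' (H U)
  have hφ : (φ.ker : Set K) = ⋂ U, (H U : Set K) := by
    ext x
    simp [φ, funext_iff]
  refine ⟨φ.ker, ?_, ?_, ?_, ?_⟩
  · rw [hφ]
    exact isClosed_iInter hHc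
  · rw [hφ]
    exact isGAlphaSet_iInter (fun U => (hHδ U).isGAlphaSet hα) hα hcard
  · rw [hφ]
    exact fun x hx => mem_sInter.2 fun U hU => hHU ⟨U, hU⟩ (mem_iInter.1 hx ⟨U, hU⟩)
  · exact (tweight_quotient_ker_le φ (continuous_pi fun U => continuous_quot_mk)).trans
      (tweight_pi_le hα hcard fun U => tweight_le_aleph0.trans hα)

theorem tweight_range_le_of_le_ker [CompactSpace K] {L : Type u} [AddGroup L] [TopologicalSpace L]
    [IsTopologicalAddGroup L] [T2Space L] (f : K →+ L) (hf : Continuous f) {H : AddSubgroup K}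
    (hH : H ≤ f.ker) : tweight f.range ≤ tweight (K ⧸ H) := by
  let ψ := QuotientAddGroup.lift H f.rangeRestrict (f.ker_rangeRestrict ▸ hH)
  have := isCompact_iff_compactSpace.1 (f.coe_range ▸ isCompact_range hf)
  have hopen : IsOpenMap f.rangeRestrict :=
    AddMonoidHom.isOpenMap_of_sigmaCompact _ f.rangeRestrict_surjective (hf.subtype_mk _)
  refine IsOpenMap.tweight_le (f := ψ) (fun O hO => ?_)
    ((QuotientAddGroup.isQuotientMap_mk _).continuous_iff.2 (hf.subtype_mk _)) ?_
  · rw [← image_preimage_eq O QuotientAddGroup.mk_surjective, image_image]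
    exact hopen _ (hO.preimage continuous_quot_mk)
  · exact QuotientAddGroup.lift_surjective_of_surjective _ _ f.rangeRestrict_surjective _

/-- By Baire, some `K[n]` has interior, so it is an open subgroup, hence of finite index. -/
theorem IsAddTorsion.exponentExists_of_compactSpace [CompactSpace K] [T2Space K]
    (hK : IsAddTorsion K) : AddMonoid.ExponentExists K := by
  have hcover : ⋃ n : ℕ, {x : K | (n + 1) • x = 0} = Set.univ := by
    refine eq_univ_of_forall fun x => mem_iUnion.2 ?_
    obtain ⟨n, hn, hx⟩ := (hK x).exists_nsmul_eq_zero
    exact ⟨n - 1, by simpa [Nat.sub_add_cancel hn] using hx⟩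
  obtain ⟨n, x, hx⟩ := nonempty_interior_of_iUnion_of_closed
    (fun n => isClosed_eq (continuous_nsmul (n + 1)) continuous_const) hcover
  let T := (nsmulAddMonoidHom (α := K) (n + 1)).ker
  have := T.quotient_finite_of_isOpen (T.isOpen_of_mem_nhds (mem_interior_iff_mem_nhds.1 hx))
  refine ⟨T.index * (n + 1), Nat.mul_pos (Nat.pos_of_ne_zero T.index_ne_zero_of_finite)
    n.succ_pos, fun y => ?_⟩
  rw [mul_nsmul]
  exact T.nsmul_index_mem y

end CompactGroup

section Singular

variable {α : Cardinal.{u}}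

theorem AddMonoidHom.isGAlphaSet_ker {G L : Type u} [AddGroup G] [TopologicalSpace G] [AddGroup L]
    [TopologicalSpace L] [T1Space L] (f : G →+ L) (hf : Continuous f)
    (hw : tweight f.range ≤ α) : IsGAlphaSet α (f.ker : Set G) := by
  rw [← f.ker_rangeRestrict, AddMonoidHom.coe_ker]
  exact (isGAlphaSet_singleton_of_tweight_le hw 0).preimage (hf.subtype_mk _)

theorem tweight_range_nsmulHom_le {G K : Type u} [AddCommGroup G] [TopologicalSpace G]
    [AddCommGroup K] [TopologicalSpace K] {e : G →+ K} (he : IsInducing e) (m : ℕ) :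
    tweight (nsmulHom m G).range ≤ tweight (nsmulHom m K).range := by
  let ψ : (nsmulHom m G).range → (nsmulHom m K).range :=
    Subtype.map e fun _ ⟨g, hg⟩ => ⟨e g, hg ▸ (map_nsmul e m g).symm⟩
  exact ((IsInducing.subtypeVal.of_comp_iff (f := ψ)).1 (he.comp IsInducing.subtypeVal)).tweight_le

theorem exists_nsmul_eq_zero_of_isGAlphaDense {K : Type u} [AddCommGroup K] [TopologicalSpace K]
    [IsTopologicalAddGroup K] [CompactSpace K] [T2Space K] (hα : ℵ₀ ≤ α) {D : Set K}
    (hD : IsGAlphaDense α D) {H : AddSubgroup K} (hHc : IsClosed (H : Set K))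
    (hH : IsGAlphaSet α (H : Set K)) (hDH : ∀ x ∈ D, x ∈ H → IsOfFinAddOrder x) :
    ∃ m, 0 < m ∧ ∀ x ∈ H, m • x = 0 := by
  have := isCompact_iff_compactSpace.1 hHc.isCompact
  suffices hT : IsAddTorsion H by
    obtain ⟨m, hm, hmH⟩ := hT.exponentExists_of_compactSpace
    exact ⟨m, hm, fun x hx => congrArg Subtype.val (hmH ⟨x, hx⟩)⟩
  by_contra hT
  obtain ⟨x, hx⟩ : ∃ x : H, ¬IsOfFinAddOrder x := by simpa [IsAddTorsion] using hT
  -- the elements of `H` of infinite order form a nonempty `G_α`-set, which `D` must meet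
  let S := (H : Set K) ∩ ⋂ n : ℕ, {y | (n + 1) • y = 0}ᶜ
  have hS : IsGAlphaSet α S := hH.inter ((IsGδ.iInter_of_isOpen fun n =>
    (isClosed_eq (continuous_nsmul (n + 1)) continuous_const).isOpen_compl).isGAlphaSet hα) hα
  have hxS : (x : K) ∈ S := ⟨x.2, mem_iInter.2 fun n hn =>
    hx (isOfFinAddOrder_iff_nsmul_eq_zero.2 ⟨n + 1, n.succ_pos, Subtype.ext hn⟩)⟩
  obtain ⟨y, hyD, hyH, hy⟩ := hD S hS ⟨x, hxS⟩
  obtain ⟨n, hn, hny⟩ := (hDH y hyD hyH).exists_nsmul_eq_zero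
  exact mem_iInter.1 hy (n - 1) (by simpa [Nat.sub_add_cancel hn] using hny)

theorem IsAlphaPseudocompact.isAlphaSingular_of_isGAlphaSet_torsion {G K : Type u}
    [AddCommGroup G] [TopologicalSpace G] [AddCommGroup K] [TopologicalSpace K]
    [IsTopologicalAddGroup K] [CompactSpace K] [T2Space K] (hα : ℵ₀ ≤ α)
    (hG : IsAlphaPseudocompact α G) {e : G →+ K} (he : IsInducing e) (hd : DenseRange e)
    {N : AddSubgroup G} (hN : IsGAlphaSet α (N : Set G)) (hNt : ∀ x ∈ N, IsOfFinAddOrder x) :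
    IsAlphaSingular α K := by
  obtain ⟨W, hW, hWN⟩ := he.exists_isGAlphaSet_preimage_eq hN
  have hmemN : ∀ g, e g ∈ W → g ∈ N := fun g hg => by rwa [← SetLike.mem_coe, ← hWN]
  have h0 : (0 : K) ∈ W := by
    rw [← map_zero e]
    exact (hWN ▸ N.zero_mem : (0 : G) ∈ e ⁻¹' W)
  obtain ⟨H, hHc, hHα, hHW, hw⟩ := exists_addSubgroup_subset_tweight_quotient_le hα hW h0
  obtain ⟨m, hm, hmH⟩ := exists_nsmul_eq_zero_of_isGAlphaDense hα
    (hG.isGAlphaDense_range he.continuous hd) hHc hHα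
    (by rintro _ ⟨g, rfl⟩ hg; exact e.isOfFinAddOrder (hNt g (hmemN g (hHW hg))))
  exact ⟨m, hm, (tweight_range_le_of_le_ker (nsmulHom m K) (continuous_nsmul m) hmH).trans hw⟩

end Singular

/-- `K` plays the completion of `G`: a compact group containing `G` as a dense embedded subgroup. -/
theorem statement_18 (α : Cardinal.{u}) (hα : ℵ₀ ≤ α) (G K : Type u) [AddCommGroup G]
    [TopologicalSpace G] [IsTopologicalAddGroup G] [T2Space G]
    [AddCommGroup K] [TopologicalSpace K] [IsTopologicalAddGroup K] [T2Space K]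
    [CompactSpace K]
    (hG : IsAlphaPseudocompact α G) (e : G →+ K) (he : IsEmbedding e)
    (hd : DenseRange e) :
    List.TFAE [IsAlphaSingular α G,
      ∃ m : ℕ, 0 < m ∧ (nsmulHom m G).ker ∈ LambdaAlphaAdd α G,
      ∃ N : AddSubgroup G, (∀ x ∈ N, IsOfFinAddOrder x) ∧ IsClosed (N : Set G) ∧
        IsGAlphaSet α (N : Set G),
      ∃ N ∈ LambdaAlphaAdd α G, ∀ x ∈ N, IsOfFinAddOrder x,
      IsAlphaSingular α K] := by
  tfae_have 1 → 2 := fun ⟨m, hm, hw⟩ => ⟨m, hm,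
    (nsmulHom m G).coe_ker ▸ isClosed_singleton.preimage (continuous_nsmul m),
    (nsmulHom m G).isGAlphaSet_ker (continuous_nsmul m) hw⟩
  tfae_have 2 → 3 := fun ⟨m, hm, hN⟩ =>
    ⟨_, fun _ hx => isOfFinAddOrder_iff_nsmul_eq_zero.2 ⟨m, hm, hx⟩, hN⟩
  tfae_have 3 → 4 := fun ⟨N, hNt, hN⟩ => ⟨N, hN, hNt⟩
  tfae_have 4 → 5 := fun ⟨_, hN, hNt⟩ =>
    hG.isAlphaSingular_of_isGAlphaSet_torsion hα he.isInducing hd hN.2 hNt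
  tfae_have 5 → 1 := fun ⟨m, hm, hw⟩ =>
    ⟨m, hm, (tweight_range_nsmulHom_le he.isInducing m).trans hw⟩
  tfae_finish
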